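/- Fix integers n and m with n > m and a positive integer N. If the sequence k ↦ 3^{β_k(N)} / 2^k (of rational numbers) tends to +∞ as k → ∞, then the sequence k ↦ φ_{n,k}(N + A_n) - φ_{m,k}(N + A_m) tends to -∞, and conversely. -/
import Mathlib

def T (N : ℤ) : ℤ := if Even N then N / 2 else (3 * N + 1) / 2

def F (n : ℤ) (P : ℤ) : ℤ := if Even P then (3 * P - 2 * n) / 2 else (P + 2 * n + 1) / 2

def A (n : ℤ) : ℤ := 2 * n + 1

def beta (k : ℕ) (N : ℤ) : ℕ := ((Finset.range k).filter (fun j => Odd (T^[j] N))).card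

def alpha (n : ℤ) (k : ℕ) (P : ℤ) : ℕ :=
  ((Finset.range k).filter (fun j => Even ((F n)^[j] P))).card

def phi (n : ℤ) (k : ℕ) (P : ℤ) : ℚ :=
  ((F n)^[k] P : ℚ) - ((3 : ℚ) ^ alpha n k P / 2 ^ k) * (P : ℚ)

def r (k : ℕ) (N : ℤ) : ℚ :=
  (T^[k] N : ℚ) - ((3 : ℚ) ^ beta k N / 2 ^ k) * (N : ℚ)

lemma F_step (n N : ℤ) : F n (N + A n) = T N + A n := by
  simp only [F, T, A]
  split_ifs with h1 h2 h2 <;> simp only [Int.even_iff] at * <;> omega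

lemma F_iter (n N : ℤ) (k : ℕ) : (F n)^[k] (N + A n) = T^[k] N + A n := by
  induction k with
  | zero => simp
  | succ k ih => rw [Function.iterate_succ_apply', ih, F_step, Function.iterate_succ_apply']

lemma alpha_eq (n N : ℤ) (k : ℕ) : alpha n k (N + A n) = beta k N := by
  unfold alpha beta
  congr 1
  apply Finset.filter_congr
  intro j _
  rw [F_iter]
  simp only [A, Int.even_iff, Int.odd_iff, eq_iff_iff]
  omega

lemma phi_eq (n N : ℤ) (k : ℕ) :
    phi n k (N + A n) = r k N + (A n : ℚ) - ((3 : ℚ) ^ beta k N / 2 ^ k) * (A n : ℚ) := by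
  unfold phi r
  rw [F_iter, alpha_eq]
  push_cast
  ring

theorem stmt_16 (n m : ℤ) (hnm : m < n) (N : ℤ) (hN : 0 < N) :
    Filter.Tendsto (fun k : ℕ => (3 : ℚ) ^ beta k N / 2 ^ k) Filter.atTop Filter.atTop ↔
      Filter.Tendsto (fun k : ℕ => phi n k (N + A n) - phi m k (N + A m)) Filter.atTop
        Filter.atBot := by
  set g : ℕ → ℚ := fun k => (3 : ℚ) ^ beta k N / 2 ^ k with hg
  set c : ℚ := ((A n : ℚ) - (A m : ℚ)) with hc
  have hcpos : 0 < c := by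
    simp only [hc, A]; push_cast; linarith [(by exact_mod_cast hnm : (m : ℚ) < n)]
  have heq : (fun k : ℕ => phi n k (N + A n) - phi m k (N + A m))
      = fun k => -(c * g k) + c := by
    funext k
    rw [phi_eq, phi_eq]
    ring
  rw [heq]
  constructor
  · intro h
    exact Filter.tendsto_atBot_add_const_right _ c
      (Filter.tendsto_neg_atBot_iff.mpr (h.const_mul_atTop hcpos))
  · intro h
    have h2 : Filter.Tendsto (fun k => c * g k) Filter.atTop Filter.atTop := by
      have h1 : Filter.Tendsto (fun k => -(c * g k)) Filter.atTop Filter.atBot := by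
        simpa using Filter.tendsto_atBot_add_const_right _ (-c) h
      exact Filter.tendsto_neg_atBot_iff.mp h1
    have := h2.atTop_div_const hcpos
    simpa [mul_div_cancel_left₀, ne_of_gt hcpos] using this
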